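/- arXiv:2402.18863 — 2 statements merged into one kernel-verified Lean document; each statement's English description precedes it below -/
import Mathlib

section
/- If f : U → ℝⁿ is L-Lipschitz and differentiable along straight-line paths, then for any base point x' and any two points x, y in U, the Integrated Gradients attributions satisfy ‖IG(x,x') − IG(y,x')‖ ≤ L√n·‖x−y‖ + 2L√n·‖y−x'‖. -/
open intervalIntegral

/-- Integrated Gradients attribution of `f` at `x` with base point `x'`:
`IG(x,x') = (x − x') ⊙ ∫₀¹ ∇f((1−α)x' + αx) dα` (Hadamard product). -/
noncomputable def IG {n : ℕ} (f : EuclideanSpace ℝ (Fin n) → ℝ)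
    (x x' : EuclideanSpace ℝ (Fin n)) : EuclideanSpace ℝ (Fin n) :=
  (WithLp.equiv 2 (Fin n → ℝ)).symm fun i =>
    (x i - x' i) * ∫ α in (0:ℝ)..1, gradient f ((1 - α) • x' + α • x) i

/-!
Write `A_x` for the path-averaged gradient `∫₀¹ ∇f((1−α)x' + αx) dα`, so that
`IG(x,x') = (x − x') ⊙ A_x`. A Lipschitz constant bounds every gradient, hence every
coordinate of `A_x` and `A_y`. The splitting
`(x − x') ⊙ A_x − (y − x') ⊙ A_y = (x − y) ⊙ A_x + (y − x') ⊙ (A_x − A_y)`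
and `‖w ⊙ a‖ ≤ ‖a‖_∞ ‖w‖` give `L‖x − y‖ + 2L‖y − x'‖`.
-/

theorem PiLp.norm_le_norm_of_forall_norm_apply_le {ι : Type*} [Fintype ι]
    {β γ : ι → Type*} [∀ i, NormedAddCommGroup (β i)] [∀ i, NormedAddCommGroup (γ i)]
    (x : PiLp 2 β) (y : PiLp 2 γ) (h : ∀ i, ‖x i‖ ≤ ‖y i‖) : ‖x‖ ≤ ‖y‖ := by
  rw [PiLp.norm_eq_of_L2, PiLp.norm_eq_of_L2]
  gcongr with i
  exact h i

theorem EuclideanSpace.norm_le_sqrt_card_mul_norm {n : ℕ} (z : EuclideanSpace ℝ (Fin n)) :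
    ‖z‖ ≤ Real.sqrt n * ‖z‖ := by
  cases n with
  | zero => simp [Subsingleton.elim z 0]
  | succ n =>
    have : (1 : ℝ) ≤ Real.sqrt (n + 1 : ℕ) := Real.one_le_sqrt.2 (by simp)
    nlinarith [norm_nonneg z]

theorem norm_gradient_le_of_lipschitzWith {F : Type*} [NormedAddCommGroup F]
    [InnerProductSpace ℝ F] [CompleteSpace F] {f : F → ℝ} {K : NNReal}
    (hf : LipschitzWith K f) (z : F) : ‖gradient f z‖ ≤ K := by
  rw [gradient, LinearIsometryEquiv.norm_map]
  exact norm_fderiv_le_of_lipschitz ℝ hf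

section Hadamard

variable {ι : Type*}

/-- `w ⊙ a`; as a plain function, `a` carries the sup norm. -/
noncomputable def hadamard (w : EuclideanSpace ℝ ι) (a : ι → ℝ) : EuclideanSpace ℝ ι :=
  WithLp.toLp 2 fun i => w i * a i

@[simp]
theorem hadamard_apply (w : EuclideanSpace ℝ ι) (a : ι → ℝ) (i : ι) :
    hadamard w a i = w i * a i := rfl

theorem norm_hadamard_le [Fintype ι] (w : EuclideanSpace ℝ ι) (a : ι → ℝ) :
    ‖hadamard w a‖ ≤ ‖a‖ * ‖w‖ := by
  rw [← abs_norm a, ← Real.norm_eq_abs, ← norm_smul]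
  refine PiLp.norm_le_norm_of_forall_norm_apply_le _ _ fun i => ?_
  simp only [hadamard_apply, PiLp.smul_apply, smul_eq_mul, norm_mul, norm_norm, mul_comm ‖a‖]
  gcongr
  exact norm_le_pi_norm a i

end Hadamard

noncomputable def pathAvgGradient {n : ℕ} (f : EuclideanSpace ℝ (Fin n) → ℝ)
    (x x' : EuclideanSpace ℝ (Fin n)) : Fin n → ℝ :=
  fun i => ∫ α in (0:ℝ)..1, gradient f ((1 - α) • x' + α • x) i

theorem IG_eq_hadamard {n : ℕ} (f : EuclideanSpace ℝ (Fin n) → ℝ)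
    (x x' : EuclideanSpace ℝ (Fin n)) :
    IG f x x' = hadamard (x - x') (pathAvgGradient f x x') := rfl

theorem norm_pathAvgGradient_le {n : ℕ} {f : EuclideanSpace ℝ (Fin n) → ℝ} {K : NNReal}
    (hf : LipschitzWith K f) (x x' : EuclideanSpace ℝ (Fin n)) :
    ‖pathAvgGradient f x x'‖ ≤ K := by
  refine (pi_norm_le_iff_of_nonneg K.coe_nonneg).2 fun i => ?_
  have := norm_integral_le_of_norm_le_const (a := 0) (b := 1) fun α _ =>
    (PiLp.norm_apply_le (gradient f ((1 - α) • x' + α • x)) i).trans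
      (norm_gradient_le_of_lipschitzWith hf _)
  simpa [pathAvgGradient] using this

theorem IG_sub_IG {n : ℕ} (f : EuclideanSpace ℝ (Fin n) → ℝ) (x' x y : EuclideanSpace ℝ (Fin n)) :
    IG f x x' - IG f y x' = hadamard (x - y) (pathAvgGradient f x x')
      + hadamard (y - x') (pathAvgGradient f x x' - pathAvgGradient f y x') := by
  ext i
  simp only [IG_eq_hadamard, PiLp.sub_apply, PiLp.add_apply, hadamard_apply, Pi.sub_apply]
  ring

theorem norm_IG_sub_IG_le {n : ℕ} {f : EuclideanSpace ℝ (Fin n) → ℝ} {K : NNReal}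
    (hf : LipschitzWith K f) (x' x y : EuclideanSpace ℝ (Fin n)) :
    ‖IG f x x' - IG f y x'‖ ≤ K * ‖x - y‖ + 2 * K * ‖y - x'‖ := by
  have hAx := norm_pathAvgGradient_le hf x x'
  have hAy := norm_pathAvgGradient_le hf y x'
  calc ‖IG f x x' - IG f y x'‖
      ≤ ‖pathAvgGradient f x x'‖ * ‖x - y‖
        + ‖pathAvgGradient f x x' - pathAvgGradient f y x'‖ * ‖y - x'‖ := by
        rw [IG_sub_IG]
        exact (norm_add_le _ _).trans (add_le_add (norm_hadamard_le _ _) (norm_hadamard_le _ _))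
    _ ≤ K * ‖x - y‖ + (K + K) * ‖y - x'‖ := by
        gcongr
        exact (norm_sub_le _ _).trans (add_le_add hAx hAy)
    _ = K * ‖x - y‖ + 2 * K * ‖y - x'‖ := by ring

theorem ig_astuteness_bound_general {n : ℕ} (f : EuclideanSpace ℝ (Fin n) → ℝ) (L : ℝ) (hL : 0 ≤ L)
    (hf : ∀ a b : EuclideanSpace ℝ (Fin n), ‖f a - f b‖ ≤ L * ‖a - b‖)
    (x' x y : EuclideanSpace ℝ (Fin n)) :
    ‖IG f x x' - IG f y x'‖ ≤
      L * Real.sqrt n * ‖x - y‖ + 2 * L * Real.sqrt n * ‖y - x'‖ := by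
  have hlip : LipschitzWith ⟨L, hL⟩ f :=
    LipschitzWith.of_dist_le_mul fun a b => by
    rw [dist_eq_norm, dist_eq_norm]
    exact hf a b
  calc ‖IG f x x' - IG f y x'‖ ≤ L * ‖x - y‖ + 2 * L * ‖y - x'‖ := norm_IG_sub_IG_le hlip x' x y
    _ ≤ L * (Real.sqrt n * ‖x - y‖) + 2 * L * (Real.sqrt n * ‖y - x'‖) := by
        gcongr <;> exact EuclideanSpace.norm_le_sqrt_card_mul_norm _
    _ = L * Real.sqrt n * ‖x - y‖ + 2 * L * Real.sqrt n * ‖y - x'‖ := by ring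

/-- If `f : ℝⁿ → ℝ` is `L`-Lipschitz and differentiable along the straight-line paths from the
base point `x'` to `x` and to `y`, then the Integrated Gradients attributions satisfy
`‖IG(x,x') − IG(y,x')‖ ≤ L√n‖x−y‖ + 2L√n‖y−x'‖`. -/
theorem ig_astuteness_bound {n : ℕ} (f : EuclideanSpace ℝ (Fin n) → ℝ) (L : ℝ) (hL : 0 ≤ L)
    (hf : ∀ a b : EuclideanSpace ℝ (Fin n), ‖f a - f b‖ ≤ L * ‖a - b‖)
    (x' x y : EuclideanSpace ℝ (Fin n))
    (hdiffx : ∀ α ∈ Set.Icc (0:ℝ) 1, DifferentiableAt ℝ f ((1 - α) • x' + α • x))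
    (hdiffy : ∀ α ∈ Set.Icc (0:ℝ) 1, DifferentiableAt ℝ f ((1 - α) • x' + α • y)) :
    ‖IG f x x' - IG f y x'‖ ≤
      L * Real.sqrt n * ‖x - y‖ + 2 * L * Real.sqrt n * ‖y - x'‖ :=
  ig_astuteness_bound_general f L hL hf x' x y
end

section
/- Under the hypotheses of the LIME setup, the LIME local surrogates satisfy ‖g_x(x) − g_y(y)‖ ≤ C + L‖x−y‖ where C = 2√(2|D| + L²r²), for all x, y with ‖x−y‖ ≤ r. -/
/-!
Each surrogate fits `f` well at its own centre: comparing `g_z` with the constant model `f z`,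
the weighted loss of `g_z` is at most that of the constant, which is at most `2 |D|`, while the
term `a = z` alone (weight `π z z = 1`) bounds `‖f z - g_z z‖²` by that loss. The triangle
inequality through `f x` and `f y` then adds the Lipschitz bound on `‖f x - f y‖`.
-/

open Finset

section WeightedLoss

variable {α F : Type*} [SeminormedAddCommGroup F]

theorem sq_norm_le_weighted_sum_sq_norm {S : Finset α} {w : α → ℝ} (u : α → F)
    (hw : ∀ a ∈ S, 0 ≤ w a) {z : α} (hz : z ∈ S) (hwz : w z = 1) :
    ‖u z‖ ^ 2 ≤ ∑ a ∈ S, w a * ‖u a‖ ^ 2 := by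
  calc ‖u z‖ ^ 2 = w z * ‖u z‖ ^ 2 := by rw [hwz, one_mul]
    _ ≤ ∑ a ∈ S, w a * ‖u a‖ ^ 2 :=
      single_le_sum (f := fun a => w a * ‖u a‖ ^ 2)
        (fun a ha => mul_nonneg (hw a ha) (sq_nonneg _)) hz

theorem weighted_sum_sq_norm_le_card_mul {S : Finset α} {w : α → ℝ} {u : α → F} {M : ℝ}
    (hw1 : ∀ a ∈ S, w a ≤ 1) (hu : ∀ a ∈ S, ‖u a‖ ^ 2 ≤ M) :
    ∑ a ∈ S, w a * ‖u a‖ ^ 2 ≤ S.card * M := by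
  simpa using sum_le_card_nsmul S _ M fun a ha =>
    (mul_le_mul (hw1 a ha) (hu a ha) (sq_nonneg _) zero_le_one).trans_eq (one_mul M)

end WeightedLoss

theorem norm_sub_le_sqrt_of_le_const_loss {E F : Type*} [SeminormedAddCommGroup F]
    {D S : Finset E} (hSD : S ⊆ D) {z : E} (hzS : z ∈ S) {f g : E → F} {w : E → ℝ}
    {M : ℝ}
    (hw0 : ∀ a ∈ S, 0 ≤ w a) (hw1 : ∀ a ∈ S, w a ≤ 1) (hwz : w z = 1)
    (hbd : ∀ a b, ‖f a - f b‖ ^ 2 ≤ M)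
    (hmin : ∑ a ∈ S, w a * ‖f a - g a‖ ^ 2 ≤ ∑ a ∈ S, w a * ‖f a - f z‖ ^ 2) :
    ‖f z - g z‖ ≤ Real.sqrt (M * D.card) := by
  have hM : 0 ≤ M := (sq_nonneg _).trans (hbd z z)
  apply Real.le_sqrt_of_sq_le
  calc ‖f z - g z‖ ^ 2 ≤ ∑ a ∈ S, w a * ‖f a - g a‖ ^ 2 :=
        sq_norm_le_weighted_sum_sq_norm (fun a => f a - g a) hw0 hzS hwz
    _ ≤ ∑ a ∈ S, w a * ‖f a - f z‖ ^ 2 := hmin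
    _ ≤ S.card * M :=
        weighted_sum_sq_norm_le_card_mul hw1 fun a _ => hbd a z
    _ ≤ M * D.card := by
        rw [mul_comm]
        gcongr

theorem lime_surrogate_stability_general {E F : Type*} [NormedAddCommGroup E]
    [NormedAddCommGroup F]
    (D : Finset E) (f : E → F) (L r : ℝ)
    (hlip : ∀ a b : E, ‖f a - f b‖ ≤ L * ‖a - b‖)
    (hbd : ∀ a b : E, ‖f a - f b‖ ^ 2 ≤ 2)
    (π : E → E → ℝ) (hπ0 : ∀ a b, 0 ≤ π a b) (hπ1 : ∀ a b, π a b ≤ 1)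
    (hπd : ∀ a, π a a = 1)
    (x y : E)
    (Sx Sy : Finset E) (hSxD : Sx ⊆ D) (hxSx : x ∈ Sx)
    (hSyD : Sy ⊆ D) (hySy : y ∈ Sy)
    (G : Set (E → F)) (hG : ∀ c : F, (fun _ => c) ∈ G)
    (gx : E → F)
    (hminx : ∀ h ∈ G,
      ∑ a ∈ Sx, π x a * ‖f a - gx a‖ ^ 2 ≤ ∑ a ∈ Sx, π x a * ‖f a - h a‖ ^ 2)
    (gy : E → F)
    (hminy : ∀ h ∈ G,
      ∑ a ∈ Sy, π y a * ‖f a - gy a‖ ^ 2 ≤ ∑ a ∈ Sy, π y a * ‖f a - h a‖ ^ 2) :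
    ‖gx x - gy y‖ ≤ 2 * Real.sqrt (2 * D.card + L ^ 2 * r ^ 2) + L * ‖x - y‖ := by
  have hfit_x : ‖f x - gx x‖ ≤ Real.sqrt (2 * D.card) :=
    norm_sub_le_sqrt_of_le_const_loss hSxD hxSx (fun a _ => hπ0 x a) (fun a _ => hπ1 x a)
      (hπd x) hbd (hminx _ (hG (f x)))
  have hfit_y : ‖f y - gy y‖ ≤ Real.sqrt (2 * D.card) :=
    norm_sub_le_sqrt_of_le_const_loss hSyD hySy (fun a _ => hπ0 y a) (fun a _ => hπ1 y a)
      (hπd y) hbd (hminy _ (hG (f y)))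
  have hsqrt : Real.sqrt (2 * D.card) ≤ Real.sqrt (2 * D.card + L ^ 2 * r ^ 2) :=
    Real.sqrt_le_sqrt (le_add_of_nonneg_right (by positivity))
  calc ‖gx x - gy y‖ ≤ ‖gx x - f x‖ + ‖f x - f y‖ + ‖f y - gy y‖ := by
        simpa only [dist_eq_norm] using dist_triangle4 (gx x) (f x) (f y) (gy y)
    _ ≤ 2 * Real.sqrt (2 * D.card + L ^ 2 * r ^ 2) + L * ‖x - y‖ := by
        rw [norm_sub_rev (gx x)]
        linarith [hlip x y]

/-- LIME robustness bound: under the LIME setup (with `f` `L`-Lipschitz, outputs with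
`‖f(x)−f(y)‖² ≤ 2`, kernel `0 ≤ π ≤ 1` with `π(z,z)=1`, neighbourhoods `S_z ⊆ D` finite
containing `z` with `|S_z| ≤ |D|+1`, and `g_x`, `g_y` minimizers of the local weighted
least-squares losses over a class containing constants), for all `x, y` with `‖x−y‖ ≤ r`,
`‖g_x(x) − g_y(y)‖ ≤ C + L‖x−y‖` where `C = 2√(2|D| + L²r²)`. -/
theorem lime_surrogate_stability {E F : Type*} [DecidableEq E] [NormedAddCommGroup E]
    [NormedAddCommGroup F]
    (D : Finset E) (f : E → F) (L r : ℝ) (hL : 0 ≤ L) (hr : 0 < r)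
    (hlip : ∀ a b : E, ‖f a - f b‖ ≤ L * ‖a - b‖)
    (hbd : ∀ a b : E, ‖f a - f b‖ ^ 2 ≤ 2)
    (π : E → E → ℝ) (hπ0 : ∀ a b, 0 ≤ π a b) (hπ1 : ∀ a b, π a b ≤ 1)
    (hπd : ∀ a, π a a = 1)
    (x y : E)
    (Sx Sy : Finset E) (hSxD : Sx ⊆ D) (hxSx : x ∈ Sx) (hcardx : Sx.card ≤ D.card + 1)
    (hSyD : Sy ⊆ D) (hySy : y ∈ Sy) (hcardy : Sy.card ≤ D.card + 1)
    (G : Set (E → F)) (hG : ∀ c : F, (fun _ => c) ∈ G)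
    (gx : E → F) (hgx : gx ∈ G)
    (hminx : ∀ h ∈ G,
      ∑ a ∈ Sx, π x a * ‖f a - gx a‖ ^ 2 ≤ ∑ a ∈ Sx, π x a * ‖f a - h a‖ ^ 2)
    (gy : E → F) (hgy : gy ∈ G)
    (hminy : ∀ h ∈ G,
      ∑ a ∈ Sy, π y a * ‖f a - gy a‖ ^ 2 ≤ ∑ a ∈ Sy, π y a * ‖f a - h a‖ ^ 2)
    (hxy : ‖x - y‖ ≤ r) :
    ‖gx x - gy y‖ ≤ 2 * Real.sqrt (2 * D.card + L ^ 2 * r ^ 2) + L * ‖x - y‖ :=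
  lime_surrogate_stability_general D f L r hlip hbd π hπ0 hπ1 hπd x y Sx Sy hSxD hxSx hSyD hySy G hG
    gx hminx gy hminy
end
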